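/- The semigroup I^cf_λ is bisimple: any two elements α, β of I^cf_λ are Green's D-equivalent, i.e., there exists γ in I^cf_λ with α R γ and γ L β. -/

import Mathlib

open Function Set

namespace IcfPaper

variable {ι : Type*}

lemma trans_none_finite {f g : ι ≃. ι}
    (hf : {a | f a = none}.Finite) (hg : {b | g b = none}.Finite) :
    {a | (f.trans g) a = none}.Finite := by
  have hsub : {a | (f.trans g) a = none} ⊆
      {a | f a = none} ∪ ⋃ b ∈ {b | g b = none}, {a | f.symm b = some a} := by
    intro a ha
    simp only [Set.mem_setOf_eq] at ha
    rcases hfa : f a with _ | b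
    · exact Or.inl hfa
    · have hg' : g b = none := by
        have : (f.trans g) a = (f a).bind g := rfl
        rw [this, hfa, Option.bind_some] at ha
        exact ha
      refine Or.inr ?_
      refine Set.mem_biUnion hg' ?_
      exact (PEquiv.eq_some_iff f).2 hfa
  refine Set.Finite.subset (hf.union (hg.biUnion ?_)) hsub
  intro b _
  apply Set.Subsingleton.finite
  intro a1 h1 a2 h2
  simp only [Set.mem_setOf_eq] at h1 h2
  rw [h1] at h2
  exact Option.some_injective _ h2

/-- The monoid of injective partial selfmaps of `ι` with cofinite domain and range. -/
def Icf (ι : Type*) : Type _ :=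
  {f : ι ≃. ι // {a | f a = none}.Finite ∧ {b | f.symm b = none}.Finite}

namespace Icf

instance : Monoid (Icf ι) where
  mul f g := ⟨f.1.trans g.1, trans_none_finite f.2.1 g.2.1, by
      rw [PEquiv.symm_trans_rev]
      exact trans_none_finite g.2.2 f.2.2⟩
  one := ⟨PEquiv.refl ι, by
      constructor <;>
      · convert Set.finite_empty
        ext a
        simp only [Set.mem_setOf_eq, Set.mem_empty_iff_false, iff_false]
        intro h
        simp at h⟩
  mul_assoc a b c := Subtype.ext (PEquiv.trans_assoc _ _ _)
  one_mul a := Subtype.ext (PEquiv.refl_trans _)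
  mul_one a := Subtype.ext (PEquiv.trans_refl _)

/-- The domain of an element of `Icf ι`. -/
def dom (f : Icf ι) : Set ι := {a | (f.1 a).isSome}

/-- The range of an element of `Icf ι`. -/
def ran (f : Icf ι) : Set ι := {b | (f.1.symm b).isSome}

/-- `d̄ f`, the number of points of `ι` outside of the domain of `f`. -/
noncomputable def dbar (f : Icf ι) : ℕ := (dom f)ᶜ.ncard

/-- `r̄ f`, the number of points of `ι` outside of the range of `f`. -/
noncomputable def rbar (f : Icf ι) : ℕ := (ran f)ᶜ.ncard

end Icf

/-- The bicyclic semigroup `⟨p, q | pq = 1⟩`, realized as `ℕ × ℕ` with the operation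
`(a,b)(c,d) = (a - b + max(b,c), d - c + max(b,c))`. -/
def Bicyclic : Type := ℕ × ℕ

instance : Mul Bicyclic :=
  ⟨fun x y => (x.1 - x.2 + max x.2 y.1, y.2 - y.1 + max x.2 y.1)⟩

/-!
In an inverse monoid of partial bijections, `α = γ * (γ⁻¹ * α)` whenever `dom α ⊆ dom γ`, and
dually `β = (β * γ⁻¹) * γ` whenever `ran β ⊆ ran γ`; so equal domains give `R`-equivalence and
equal ranges give `L`-equivalence. Cofinite subsets of an infinite set all have the cardinality
of the set, so some bijection `dom α → ran β` exists, and it is an element `γ` of `I^cf_λ`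
that is `R`-equivalent to `α` and `L`-equivalent to `β`.
-/

end IcfPaper

section Semigroup

variable {M : Type*} [Semigroup M]

theorem range_mul_left_subset_of_dvd {a b : M} (h : b ∣ a) :
    Set.range (a * ·) ⊆ Set.range (b * ·) := by
  obtain ⟨c, rfl⟩ := h
  rintro _ ⟨x, rfl⟩
  exact ⟨c * x, (mul_assoc b c x).symm⟩

theorem range_mul_right_subset_of_eq_mul {a b c : M} (h : a = c * b) :
    Set.range (· * a) ⊆ Set.range (· * b) := by
  subst h
  rintro _ ⟨x, rfl⟩
  exact ⟨x * c, mul_assoc x c b⟩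

end Semigroup

namespace PEquiv

variable {α β : Type*}

theorem setOf_eq_none (f : α ≃. β) : {a | f a = none} = {a | (f a).isSome}ᶜ := by
  ext a
  simp

theorem ofSet_trans_of_subset (f : α ≃. β) {s : Set α} [DecidablePred (· ∈ s)]
    (h : {a | (f a).isSome} ⊆ s) : (ofSet s).trans f = f := by
  ext a b
  by_cases ha : a ∈ s
  · simp [PEquiv.trans, ofSet, ha]
  · have : f a = none := by simpa using mt (@h a) ha
    simp [PEquiv.trans, ofSet, ha, this]

theorem trans_ofSet_of_subset (f : α ≃. β) {t : Set β} [DecidablePred (· ∈ t)]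
    (h : {b | (f.symm b).isSome} ⊆ t) : f.trans (ofSet t) = f :=
  symm_injective <| by rw [symm_trans_rev, ofSet_symm, ofSet_trans_of_subset f.symm h]

open scoped Classical in
noncomputable def ofSubtypeEquiv {s : Set α} {t : Set β} (e : s ≃ t) : α ≃. β where
  toFun a := if ha : a ∈ s then some (e ⟨a, ha⟩) else none
  invFun b := if hb : b ∈ t then some (e.symm ⟨b, hb⟩) else none
  inv a b := by
    split_ifs with hb ha ha
    · simp only [Option.some.injEq]
      constructor
      · rintro rfl
        simp
      · rintro rfl
        simp
    · simp only [Option.some.injEq, iff_false]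
      exact fun h => ha (h ▸ (e.symm ⟨b, hb⟩).2)
    · simp only [Option.some.injEq, false_iff]
      exact fun h => hb (h ▸ (e ⟨a, ha⟩).2)
    · simp

variable {s : Set α} {t : Set β} (e : s ≃ t)

theorem symm_ofSubtypeEquiv : (ofSubtypeEquiv e).symm = ofSubtypeEquiv e.symm := rfl

theorem isSome_ofSubtypeEquiv : {a | (ofSubtypeEquiv e a).isSome} = s := by
  ext a
  by_cases ha : a ∈ s <;> simp [ofSubtypeEquiv, ha]

end PEquiv

namespace Cardinal

theorem mk_eq_of_finite_compl {α : Type*} [Infinite α] {s t : Set α}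
    (hs : sᶜ.Finite) (ht : tᶜ.Finite) : #s = #t := by
  have hlt : ∀ {u : Set α}, u.Finite → #u < #α := fun hu =>
    hu.lt_aleph0.trans_le (aleph0_le_mk α)
  simpa using mk_compl_eq_mk_compl_infinite (hlt hs) (hlt ht)

end Cardinal

namespace IcfPaper

variable {ι : Type*}

namespace Icf

def symm (f : Icf ι) : Icf ι := ⟨f.1.symm, f.2.2, f.2.1⟩

theorem finite_compl_dom (f : Icf ι) : (dom f)ᶜ.Finite := by
  rw [dom, ← PEquiv.setOf_eq_none]
  exact f.2.1

theorem finite_compl_ran (f : Icf ι) : (ran f)ᶜ.Finite := by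
  rw [ran, ← PEquiv.setOf_eq_none]
  exact f.2.2

theorem dvd_of_dom_subset {α γ : Icf ι} (h : dom α ⊆ dom γ) : γ ∣ α := by
  refine ⟨γ.symm * α, Subtype.ext ?_⟩
  change α.1 = γ.1.trans (γ.1.symm.trans α.1)
  rw [← PEquiv.trans_assoc, PEquiv.self_trans_symm]
  exact (PEquiv.ofSet_trans_of_subset (s := {a | (γ.1 a).isSome}) _ h).symm

theorem eq_mul_of_ran_subset {β γ : Icf ι} (h : ran β ⊆ ran γ) : β = β * γ.symm * γ := by
  refine Subtype.ext ?_
  change β.1 = (β.1.trans γ.1.symm).trans γ.1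
  rw [PEquiv.trans_assoc, PEquiv.symm_trans_self]
  exact (PEquiv.trans_ofSet_of_subset (t := {b | (γ.1.symm b).isSome}) _ h).symm

theorem range_mul_left_eq_of_dom_eq {α γ : Icf ι} (h : dom α = dom γ) :
    Set.range (α * ·) = Set.range (γ * ·) :=
  (range_mul_left_subset_of_dvd (dvd_of_dom_subset h.le)).antisymm
    (range_mul_left_subset_of_dvd (dvd_of_dom_subset h.ge))

theorem range_mul_right_eq_of_ran_eq {β γ : Icf ι} (h : ran β = ran γ) :
    Set.range (· * β) = Set.range (· * γ) :=
  (range_mul_right_subset_of_eq_mul (eq_mul_of_ran_subset h.le)).antisymm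
    (range_mul_right_subset_of_eq_mul (eq_mul_of_ran_subset h.ge))

section OfSubtypeEquiv

variable {s t : Set ι} (e : s ≃ t) (hs : sᶜ.Finite) (ht : tᶜ.Finite)

noncomputable def ofSubtypeEquiv : Icf ι :=
  ⟨PEquiv.ofSubtypeEquiv e,
    by rwa [PEquiv.setOf_eq_none, PEquiv.isSome_ofSubtypeEquiv],
    by rwa [PEquiv.setOf_eq_none, PEquiv.symm_ofSubtypeEquiv, PEquiv.isSome_ofSubtypeEquiv]⟩

theorem dom_ofSubtypeEquiv : dom (ofSubtypeEquiv e hs ht) = s :=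
  PEquiv.isSome_ofSubtypeEquiv e

theorem ran_ofSubtypeEquiv : ran (ofSubtypeEquiv e hs ht) = t :=
  PEquiv.isSome_ofSubtypeEquiv e.symm

end OfSubtypeEquiv

end Icf

/-- `Icf ι` is bisimple: any two elements are `D`-equivalent, i.e. for all `α β` there is a
`γ` with `α R γ` and `γ L β`. -/
theorem statement6 {ι : Type*} [Infinite ι] (α β : Icf ι) :
    ∃ γ : Icf ι,
      Set.range (fun χ : Icf ι => α * χ) = Set.range (fun χ : Icf ι => γ * χ) ∧
      Set.range (fun χ : Icf ι => χ * γ) = Set.range (fun χ : Icf ι => χ * β) := by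
  obtain ⟨e⟩ :=
    Cardinal.eq.1 (Cardinal.mk_eq_of_finite_compl α.finite_compl_dom β.finite_compl_ran)
  let γ := Icf.ofSubtypeEquiv e α.finite_compl_dom β.finite_compl_ran
  exact ⟨γ, Icf.range_mul_left_eq_of_dom_eq (Icf.dom_ofSubtypeEquiv ..).symm,
    Icf.range_mul_right_eq_of_ran_eq (Icf.ran_ofSubtypeEquiv ..)⟩

end IcfPaper
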